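/- arXiv:2603.25448 — 4 statements merged into one kernel-verified Lean document; each statement's English description precedes it below -/
import Mathlib

section
/- Let $R_2 > R_1 > 0$, $d \in [0, R_2 - R_1)$, and define $R_d(\theta) = d\cos\theta + \sqrt{R_2^2 - d^2\sin^2\theta}$. For every integer $n \geq 2$, setting $\phi(\theta) = -n\sin^n\theta + (n-1)\sin^{n-2}\theta$, one has $\int_0^\pi \phi(\theta)\,\ln\!\left(\frac{R_d(\theta)}{R_1}\right) d\theta = 0$. -/
open Real

theorem stmt1 (R1 R2 : ℝ) (h1 : 0 < R1) (h2 : R1 < R2)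
    (d : ℝ) (hd : d ∈ Set.Ico 0 (R2 - R1)) (n : ℕ) (hn : 2 ≤ n) :
    ∫ θ in (0:ℝ)..π,
        (-(n : ℝ) * Real.sin θ ^ n + ((n : ℝ) - 1) * Real.sin θ ^ (n - 2)) *
          Real.log ((d * Real.cos θ + Real.sqrt (R2 ^ 2 - d ^ 2 * Real.sin θ ^ 2)) / R1)
      = 0 := by
  obtain ⟨hd0, hd1⟩ := hd
  have hdR2 : d < R2 := by linarith
  -- positivity of the radial expression, in both orientations
  have hnn : ∀ θ : ℝ, 0 ≤ R2 ^ 2 - d ^ 2 * Real.sin θ ^ 2 := by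
    intro θ
    nlinarith [Real.sin_sq_le_one θ, sq_nonneg d]
  have hsq : ∀ θ : ℝ, Real.sqrt (R2 ^ 2 - d ^ 2 * Real.sin θ ^ 2) ^ 2
      = R2 ^ 2 - d ^ 2 * Real.sin θ ^ 2 := fun θ => Real.sq_sqrt (hnn θ)
  have ha : ∀ θ : ℝ, 0 < d * Real.cos θ + Real.sqrt (R2 ^ 2 - d ^ 2 * Real.sin θ ^ 2) := by
    intro θ
    nlinarith [hsq θ, Real.sqrt_nonneg (R2 ^ 2 - d ^ 2 * Real.sin θ ^ 2),
      Real.sin_sq_add_cos_sq θ, sq_nonneg (d * Real.cos θ + Real.sqrt (R2 ^ 2 - d ^ 2 * Real.sin θ ^ 2))]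
  have hb : ∀ θ : ℝ, 0 < d * -Real.cos θ + Real.sqrt (R2 ^ 2 - d ^ 2 * Real.sin θ ^ 2) := by
    intro θ
    nlinarith [hsq θ, Real.sqrt_nonneg (R2 ^ 2 - d ^ 2 * Real.sin θ ^ 2),
      Real.sin_sq_add_cos_sq θ, sq_nonneg (d * -Real.cos θ + Real.sqrt (R2 ^ 2 - d ^ 2 * Real.sin θ ^ 2))]
  set f : ℝ → ℝ := fun θ =>
      (-(n : ℝ) * Real.sin θ ^ n + ((n : ℝ) - 1) * Real.sin θ ^ (n - 2)) *
        Real.log ((d * Real.cos θ + Real.sqrt (R2 ^ 2 - d ^ 2 * Real.sin θ ^ 2)) / R1) with hf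
  show (∫ θ in (0:ℝ)..π, f θ) = 0
  -- continuity / integrability
  have hcφ : Continuous fun θ : ℝ =>
      -(n : ℝ) * Real.sin θ ^ n + ((n : ℝ) - 1) * Real.sin θ ^ (n - 2) := by fun_prop
  have hcf : Continuous f := by
    rw [hf]
    have hbase : Continuous fun θ : ℝ =>
        (d * Real.cos θ + Real.sqrt (R2 ^ 2 - d ^ 2 * Real.sin θ ^ 2)) / R1 := by fun_prop
    exact hcφ.mul (hbase.log fun θ => ne_of_gt (div_pos (ha θ) h1))
  have hφint : IntervalIntegrable (fun θ : ℝ =>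
      -(n : ℝ) * Real.sin θ ^ n + ((n : ℝ) - 1) * Real.sin θ ^ (n - 2)) MeasureTheory.volume 0 π :=
    hcφ.intervalIntegrable 0 π
  have hfint : IntervalIntegrable f MeasureTheory.volume 0 π := hcf.intervalIntegrable 0 π
  -- the integral of φ vanishes
  have hIφ : (∫ θ in (0:ℝ)..π,
      (-(n : ℝ) * Real.sin θ ^ n + ((n : ℝ) - 1) * Real.sin θ ^ (n - 2))) = 0 := by
    obtain ⟨m, hm⟩ : ∃ m, n = m + 2 := ⟨n - 2, by omega⟩
    subst hm
    simp only [Nat.add_sub_cancel]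
    push_cast
    rw [intervalIntegral.integral_add
      ((by fun_prop : Continuous fun θ : ℝ => -((m:ℝ)+2) * Real.sin θ ^ (m+2)).intervalIntegrable 0 π)
      ((by fun_prop : Continuous fun θ : ℝ => (((m:ℝ)+2) - 1) * Real.sin θ ^ m).intervalIntegrable 0 π),
      intervalIntegral.integral_const_mul, intervalIntegral.integral_const_mul,
      integral_sin_pow m]
    have hm2 : ((m:ℝ) + 2) ≠ 0 := by positivity
    simp only [Real.sin_zero, Real.sin_pi, Real.cos_zero, Real.cos_pi,
      zero_pow (Nat.succ_ne_zero m), zero_mul, mul_one, sub_zero, zero_sub, zero_div, zero_add]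
    field_simp
    ring
  -- reflection identity
  have hrefl : ∀ θ : ℝ, f (π - θ) =
      Real.log ((R2 ^ 2 - d ^ 2) / R1 ^ 2) *
        (-(n : ℝ) * Real.sin θ ^ n + ((n : ℝ) - 1) * Real.sin θ ^ (n - 2)) - f θ := by
    intro θ
    have hmul : ((d * -Real.cos θ + Real.sqrt (R2 ^ 2 - d ^ 2 * Real.sin θ ^ 2)) / R1) *
        ((d * Real.cos θ + Real.sqrt (R2 ^ 2 - d ^ 2 * Real.sin θ ^ 2)) / R1)
        = (R2 ^ 2 - d ^ 2) / R1 ^ 2 := by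
      rw [div_mul_div_comm]
      rw [show R1 * R1 = R1 ^ 2 by ring]
      congr 1
      linear_combination hsq θ - d ^ 2 * (Real.sin_sq_add_cos_sq θ)
    have hlog : Real.log ((R2 ^ 2 - d ^ 2) / R1 ^ 2)
        = Real.log ((d * -Real.cos θ + Real.sqrt (R2 ^ 2 - d ^ 2 * Real.sin θ ^ 2)) / R1)
          + Real.log ((d * Real.cos θ + Real.sqrt (R2 ^ 2 - d ^ 2 * Real.sin θ ^ 2)) / R1) := by
      rw [← hmul, Real.log_mul (ne_of_gt (div_pos (hb θ) h1)) (ne_of_gt (div_pos (ha θ) h1))]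
    simp only [hf, Real.sin_pi_sub, Real.cos_pi_sub]
    rw [hlog]
    ring
  -- conclude
  have hA : (∫ θ in (0:ℝ)..π, f (π - θ)) = ∫ θ in (0:ℝ)..π, f θ := by
    rw [intervalIntegral.integral_comp_sub_left f π]
    norm_num
  have hB : (∫ θ in (0:ℝ)..π, f (π - θ)) = - ∫ θ in (0:ℝ)..π, f θ := by
    simp only [hrefl]
    rw [intervalIntegral.integral_sub (hφint.const_mul _) hfint,
      intervalIntegral.integral_const_mul, hIφ]
    ring
  linarith [hA, hB]
end

section
/- Let $R_2 > R_1 > 0$, $d \in [0, R_2 - R_1)$, and define $R_d(\theta) = d\cos\theta + \sqrt{R_2^2 - d^2\sin^2\theta}$. For every integer $n \geq 2$, setting $\psi(\theta) = (n-2)\sin^n\theta + (n-1)\sin^{n-2}\theta$ and $A_3(d) = \int_0^\pi \psi(\theta)\left(\frac{1}{R_d^n(\theta)} - \frac{1}{R_1^n}\right) d\theta$, one has $A_3(d) \geq A_3(0)$, with equality if and only if $d = 0$. -/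
open Real

/-- The quantity `A₃(d)` from the paper. -/
noncomputable def A3 (R1 R2 : ℝ) (n : ℕ) (d : ℝ) : ℝ :=
  ∫ θ in (0:ℝ)..π,
    (((n : ℝ) - 2) * Real.sin θ ^ n + ((n : ℝ) - 1) * Real.sin θ ^ (n - 2)) *
      (((d * Real.cos θ + Real.sqrt (R2 ^ 2 - d ^ 2 * Real.sin θ ^ 2)) ^ n)⁻¹ - (R1 ^ n)⁻¹)

noncomputable def psiF (n : ℕ) (θ : ℝ) : ℝ :=
  ((n : ℝ) - 2) * Real.sin θ ^ n + ((n : ℝ) - 1) * Real.sin θ ^ (n - 2)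

noncomputable def uF (R2 d θ : ℝ) : ℝ :=
  d * Real.cos θ + Real.sqrt (R2 ^ 2 - d ^ 2 * Real.sin θ ^ 2)

lemma A3_eq (R1 R2 : ℝ) (n : ℕ) (d : ℝ) :
    A3 R1 R2 n d = ∫ θ in (0:ℝ)..π, psiF n θ * (((uF R2 d θ) ^ n)⁻¹ - (R1 ^ n)⁻¹) := rfl

lemma psiF_cont (n : ℕ) : Continuous (psiF n) := by
  unfold psiF; fun_prop

lemma psiF_nonneg {n : ℕ} (hn : 2 ≤ n) {θ : ℝ} (h0 : 0 ≤ θ) (h1 : θ ≤ π) :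
    0 ≤ psiF n θ := by
  have hs : 0 ≤ Real.sin θ := Real.sin_nonneg_of_nonneg_of_le_pi h0 h1
  have h2 : (2:ℝ) ≤ (n:ℝ) := by exact_mod_cast hn
  unfold psiF
  have := pow_nonneg hs n
  have := pow_nonneg hs (n - 2)
  nlinarith

lemma psiF_pi_sub (n : ℕ) (θ : ℝ) : psiF n (π - θ) = psiF n θ := by
  unfold psiF; rw [Real.sin_pi_sub]

lemma uF_cont (R2 d : ℝ) : Continuous (uF R2 d) := by
  unfold uF; fun_prop

lemma sub_nonneg_aux {R2 d : ℝ} (hd0 : 0 ≤ d) (hdR2 : d < R2) (θ : ℝ) :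
    0 ≤ R2 ^ 2 - d ^ 2 * Real.sin θ ^ 2 := by
  nlinarith [Real.sin_sq_le_one θ, sq_nonneg d]

lemma uF_pos {R2 d : ℝ} (hd0 : 0 ≤ d) (hdR2 : d < R2) (θ : ℝ) : 0 < uF R2 d θ := by
  set s := Real.sqrt (R2 ^ 2 - d ^ 2 * Real.sin θ ^ 2) with hs
  have hs0 : 0 ≤ s := Real.sqrt_nonneg _
  have hs2 : s ^ 2 = R2 ^ 2 - d ^ 2 * Real.sin θ ^ 2 :=
    Real.sq_sqrt (sub_nonneg_aux hd0 hdR2 θ)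
  have habs : |d * Real.cos θ| < s := by
    apply lt_of_pow_lt_pow_left₀ 2 hs0
    rw [sq_abs]
    nlinarith [Real.sin_sq_add_cos_sq θ]
  have := neg_abs_le (d * Real.cos θ)
  unfold uF
  rw [← hs]
  linarith

lemma uF_pi_sub (R2 d θ : ℝ) :
    uF R2 d (π - θ) = -(d * Real.cos θ) + Real.sqrt (R2 ^ 2 - d ^ 2 * Real.sin θ ^ 2) := by
  unfold uF
  rw [Real.cos_pi_sub, Real.sin_pi_sub]
  ring_nf

lemma uF_mul {R2 d : ℝ} (hd0 : 0 ≤ d) (hdR2 : d < R2) (θ : ℝ) :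
    uF R2 d θ * uF R2 d (π - θ) = R2 ^ 2 - d ^ 2 := by
  rw [uF_pi_sub]
  unfold uF
  have hs2 : Real.sqrt (R2 ^ 2 - d ^ 2 * Real.sin θ ^ 2) ^ 2
      = R2 ^ 2 - d ^ 2 * Real.sin θ ^ 2 := Real.sq_sqrt (sub_nonneg_aux hd0 hdR2 θ)
  nlinarith [Real.sin_sq_add_cos_sq θ]

lemma key_le (n : ℕ) {u v c : ℝ} (hu : 0 < u) (hv : 0 < v) (hc : 0 < c)
    (h : u * v ≤ c ^ 2) : 2 * (c ^ n)⁻¹ ≤ (u ^ n)⁻¹ + (v ^ n)⁻¹ := by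
  have hu' : 0 < u ^ n := pow_pos hu n
  have hv' : 0 < v ^ n := pow_pos hv n
  have hc' : 0 < c ^ n := pow_pos hc n
  set a := Real.sqrt (u ^ n) with ha
  set b := Real.sqrt (v ^ n) with hb
  have ha2 : a ^ 2 = u ^ n := Real.sq_sqrt hu'.le
  have hb2 : b ^ 2 = v ^ n := Real.sq_sqrt hv'.le
  have ha0 : 0 ≤ a := Real.sqrt_nonneg _
  have hb0 : 0 ≤ b := Real.sqrt_nonneg _
  have hab : a * b ≤ c ^ n := by
    have h1 : (a * b) ^ 2 ≤ (c ^ n) ^ 2 := by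
      calc (a * b) ^ 2 = u ^ n * v ^ n := by rw [mul_pow, ha2, hb2]
        _ = (u * v) ^ n := (mul_pow u v n).symm
        _ ≤ (c ^ 2) ^ n := pow_le_pow_left₀ (by positivity) h n
        _ = (c ^ n) ^ 2 := by rw [← pow_mul, ← pow_mul, Nat.mul_comm]
    nlinarith [mul_nonneg ha0 hb0]
  have hmain : 2 * (u ^ n * v ^ n) ≤ c ^ n * (u ^ n + v ^ n) := by
    have hsum : 2 * (a * b) ≤ a ^ 2 + b ^ 2 := by nlinarith [sq_nonneg (a - b)]
    calc 2 * (u ^ n * v ^ n) = (a * b) * (2 * (a * b)) := by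
          rw [← ha2, ← hb2]; ring
      _ ≤ (c ^ n) * (2 * (a * b)) :=
          mul_le_mul_of_nonneg_right hab (by positivity)
      _ ≤ (c ^ n) * (u ^ n + v ^ n) := by
          apply mul_le_mul_of_nonneg_left _ hc'.le
          rw [← ha2, ← hb2]; exact hsum
  rw [← sub_nonneg]
  have expand : (u ^ n)⁻¹ + (v ^ n)⁻¹ - 2 * (c ^ n)⁻¹
      = (c ^ n * (u ^ n + v ^ n) - 2 * (u ^ n * v ^ n)) / (u ^ n * v ^ n * c ^ n) := by
    field_simp; ring
  rw [expand]
  exact div_nonneg (by linarith) (by positivity)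

theorem stmt2 (R1 R2 : ℝ) (h1 : 0 < R1) (h2 : R1 < R2)
    (d : ℝ) (hd : d ∈ Set.Ico 0 (R2 - R1)) (n : ℕ) (hn : 2 ≤ n) :
    A3 R1 R2 n 0 ≤ A3 R1 R2 n d ∧ (A3 R1 R2 n d = A3 R1 R2 n 0 ↔ d = 0) := by
  obtain ⟨hd0, hdlt⟩ := hd
  have hR2 : 0 < R2 := h1.trans h2
  have hdR2 : d < R2 := by linarith
  -- H is the difference integrand
  set H : ℝ → ℝ := fun θ => psiF n θ * (((uF R2 d θ) ^ n)⁻¹ - (R2 ^ n)⁻¹) with hH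
  have huF0 : ∀ θ, uF R2 0 θ = R2 := by
    intro θ
    unfold uF
    simp [Real.sqrt_sq hR2.le]
  have hA0 : A3 R1 R2 n 0 = ∫ θ in (0:ℝ)..π, psiF n θ * ((R2 ^ n)⁻¹ - (R1 ^ n)⁻¹) := by
    rw [A3_eq]
    apply intervalIntegral.integral_congr
    intro θ _
    simp only [huF0]
  -- continuity facts
  have hupos : ∀ θ, 0 < uF R2 d θ := uF_pos hd0 hdR2
  have hinv_cont : Continuous fun θ => ((uF R2 d θ) ^ n)⁻¹ :=
    Continuous.inv₀ ((uF_cont R2 d).pow n) (fun θ => pow_ne_zero n (hupos θ).ne')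
  have hHcont : Continuous H := by
    apply (psiF_cont n).mul (hinv_cont.sub continuous_const)
  have hFd_cont : Continuous fun θ => psiF n θ * (((uF R2 d θ) ^ n)⁻¹ - (R1 ^ n)⁻¹) :=
    (psiF_cont n).mul (hinv_cont.sub continuous_const)
  have hF0_cont : Continuous fun θ => psiF n θ * ((R2 ^ n)⁻¹ - (R1 ^ n)⁻¹) :=
    (psiF_cont n).mul continuous_const
  -- difference
  have hdiff : A3 R1 R2 n d - A3 R1 R2 n 0 = ∫ θ in (0:ℝ)..π, H θ := by
    rw [hA0, A3_eq, ← intervalIntegral.integral_sub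
      (hFd_cont.intervalIntegrable 0 π) (hF0_cont.intervalIntegrable 0 π)]
    apply intervalIntegral.integral_congr
    intro θ _
    simp only [hH]
    ring
  -- symmetry
  have hHsym_cont : Continuous fun θ => H (π - θ) :=
    hHcont.comp (continuous_const.sub continuous_id)
  have hsym : (∫ θ in (0:ℝ)..π, H (π - θ)) = ∫ θ in (0:ℝ)..π, H θ := by
    rw [intervalIntegral.integral_comp_sub_left H π]
    norm_num
  have h2I : (∫ θ in (0:ℝ)..π, (H θ + H (π - θ)))
      = 2 * ∫ θ in (0:ℝ)..π, H θ := by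
    rw [intervalIntegral.integral_add (hHcont.intervalIntegrable 0 π)
      (hHsym_cont.intervalIntegrable 0 π), hsym]
    ring
  -- pointwise nonnegativity of the symmetrized integrand
  have hpt : ∀ θ ∈ Set.Icc (0:ℝ) π, 0 ≤ H θ + H (π - θ) := by
    intro θ hθ
    have hψ : 0 ≤ psiF n θ := psiF_nonneg hn hθ.1 hθ.2
    have hkey := key_le n (hupos θ) (hupos (π - θ)) hR2
      (by rw [uF_mul hd0 hdR2]; nlinarith [sq_nonneg d])
    have : H θ + H (π - θ)
        = psiF n θ * ((((uF R2 d θ) ^ n)⁻¹ + ((uF R2 d (π - θ)) ^ n)⁻¹) - 2 * (R2 ^ n)⁻¹) := by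
      simp only [hH, psiF_pi_sub]
      ring
    rw [this]
    exact mul_nonneg hψ (by linarith)
  -- nonneg part
  have hge : 0 ≤ A3 R1 R2 n d - A3 R1 R2 n 0 := by
    rw [hdiff]
    have : 0 ≤ ∫ θ in (0:ℝ)..π, (H θ + H (π - θ)) :=
      intervalIntegral.integral_nonneg Real.pi_pos.le hpt
    linarith [h2I ▸ this]
  refine ⟨by linarith, ?_, fun h => by rw [h]⟩
  -- equality implies d = 0
  intro heq
  by_contra hd0'
  have hdpos : 0 < d := lt_of_le_of_ne hd0 (Ne.symm hd0')
  -- strict inequality at θ = π/2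
  have hstrict : (0:ℝ) < ∫ θ in (0:ℝ)..π, (H θ + H (π - θ)) := by
    have hwit : (0:ℝ) < H (π / 2) + H (π - π / 2) := by
      have heq2 : π - π / 2 = π / 2 := by ring
      rw [heq2]
      have hu2 : uF R2 d (π / 2) = Real.sqrt (R2 ^ 2 - d ^ 2) := by
        unfold uF
        simp [Real.sin_pi_div_two, Real.cos_pi_div_two]
      have hult : uF R2 d (π / 2) < R2 := by
        rw [hu2]
        have : R2 ^ 2 - d ^ 2 < R2 ^ 2 := by nlinarith
        calc Real.sqrt (R2 ^ 2 - d ^ 2) < Real.sqrt (R2 ^ 2) := by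
              apply Real.sqrt_lt_sqrt _ this
              nlinarith
          _ = R2 := Real.sqrt_sq hR2.le
      have hinvlt : (R2 ^ n)⁻¹ < ((uF R2 d (π / 2)) ^ n)⁻¹ := by
        apply inv_strictAnti₀ (pow_pos (hupos _) n)
        exact pow_lt_pow_left₀ hult (hupos _).le (by omega)
      have hψpos : 0 < psiF n (π / 2) := by
        unfold psiF
        rw [Real.sin_pi_div_two, one_pow, one_pow]
        have : (2:ℝ) ≤ (n:ℝ) := by exact_mod_cast hn
        linarith
      have : 0 < H (π / 2) := by
        simp only [hH]
        exact mul_pos hψpos (by linarith)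
      linarith
    have hlt := intervalIntegral.integral_lt_integral_of_continuousOn_of_le_of_exists_lt
      (f := fun _ => (0:ℝ)) (g := fun θ => H θ + H (π - θ))
      Real.pi_pos continuousOn_const (hHcont.add hHsym_cont).continuousOn
      (fun x hx => hpt x ⟨hx.1.le, hx.2⟩)
      ⟨π / 2, ⟨by positivity, by linarith [Real.pi_pos]⟩, hwit⟩
    simpa using hlt
  have : A3 R1 R2 n d - A3 R1 R2 n 0 = 0 := by rw [heq]; ring
  rw [hdiff] at this
  rw [h2I] at hstrict
  linarith
end

section
/- Let $R_2 > 0$, $d \in [0, R_2)$, $n \geq 2$, and define $R_d(\theta) = d\cos\theta + \sqrt{R_2^2 - d^2\sin^2\theta}$. Then $\int_0^\pi \sin^n\theta \, R_d^n(\theta)\, \sqrt{R_d(\theta)^2 + R_d'(\theta)^2}\, d\theta = R_2^{n+1} \int_0^\pi \sin^n\theta\, d\theta$; that is, $V_1(d) = V_1(0)$ for all $d \in [0, R_2)$. -/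
open Real

/-- Radial parametrization of the boundary of the shifted ball. -/
noncomputable def Rd (R2 d θ : ℝ) : ℝ :=
  d * Real.cos θ + Real.sqrt (R2 ^ 2 - d ^ 2 * Real.sin θ ^ 2)

/-! Substitute for `θ` the polar angle `φ = θ + arcsin ((d / R2) sin θ)` of the boundary point
`Rd θ · (cos θ, sin θ)` as seen from the centre `(d, 0)` of the ball (law of sines). Then
`R2 sin φ = Rd sin θ` and `φ' = Rd / √(R2² - d² sin² θ)`, while the arc-length factor
`√(Rd² + Rd'²)` equals `R2 Rd / √(R2² - d² sin² θ)`. Hence the integrand is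
`R2 ^ (n + 1) sin^n φ · φ'`, and since `φ` fixes `0` and `π` the integral is that of the
centred ball. -/

section

variable {R2 d : ℝ}

lemma sq_lt_sq_of_abs_lt (h : |d| < R2) : d ^ 2 < R2 ^ 2 :=
  sq_lt_sq' (abs_lt.mp h).1 (abs_lt.mp h).2

lemma sq_mul_sin_sq_lt (h : |d| < R2) (θ : ℝ) : d ^ 2 * sin θ ^ 2 < R2 ^ 2 := by
  nlinarith [sin_sq_le_one θ, sq_nonneg d, sq_lt_sq_of_abs_lt h]

lemma sqrt_sub_sq_mul_sin_sq_pos (h : |d| < R2) (θ : ℝ) :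
    0 < √(R2 ^ 2 - d ^ 2 * sin θ ^ 2) :=
  sqrt_pos.mpr (sub_pos.mpr (sq_mul_sin_sq_lt h θ))

lemma sq_sqrt_sub_sq_mul_sin_sq (h : |d| < R2) (θ : ℝ) :
    √(R2 ^ 2 - d ^ 2 * sin θ ^ 2) ^ 2 = R2 ^ 2 - d ^ 2 * sin θ ^ 2 :=
  sq_sqrt (sub_pos.mpr (sq_mul_sin_sq_lt h θ)).le

lemma Rd_pos (h : |d| < R2) (θ : ℝ) : 0 < Rd R2 d θ := by
  have hS := sqrt_sub_sq_mul_sin_sq_pos h θ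
  have hS2 := sq_sqrt_sub_sq_mul_sin_sq h θ
  -- `√(R2² - d² sin² θ) > |d cos θ|` because `R2² > d² = d² sin² θ + d² cos² θ`
  have hcos : (d * cos θ) ^ 2 < √(R2 ^ 2 - d ^ 2 * sin θ ^ 2) ^ 2 := by
    nlinarith [sin_sq_add_cos_sq θ, sq_lt_sq_of_abs_lt h]
  rw [Rd]
  nlinarith

lemma hasDerivAt_Rd (h : |d| < R2) (θ : ℝ) :
    HasDerivAt (Rd R2 d) (-(d * sin θ) * Rd R2 d θ / √(R2 ^ 2 - d ^ 2 * sin θ ^ 2)) θ := by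
  have hS := sqrt_sub_sq_mul_sin_sq_pos h θ
  have hrad : HasDerivAt (fun t => R2 ^ 2 - d ^ 2 * sin t ^ 2)
      (-(d ^ 2 * (2 * sin θ * cos θ))) θ := by
    simpa using (((hasDerivAt_sin θ).pow 2).const_mul (d ^ 2)).const_sub (R2 ^ 2)
  have hcos : HasDerivAt (fun t => d * cos t) (-(d * sin θ)) θ := by
    simpa [mul_comm] using (hasDerivAt_cos θ).const_mul d
  refine (hcos.add (hrad.sqrt (sub_pos.mpr (sq_mul_sin_sq_lt h θ)).ne')).congr_deriv ?_
  rw [Rd]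
  field_simp
  ring

lemma sqrt_Rd_sq_add_deriv_sq (h : |d| < R2) (θ : ℝ) :
    √(Rd R2 d θ ^ 2 + deriv (Rd R2 d) θ ^ 2)
      = R2 * Rd R2 d θ / √(R2 ^ 2 - d ^ 2 * sin θ ^ 2) := by
  have hS := sqrt_sub_sq_mul_sin_sq_pos h θ
  have hS2 := sq_sqrt_sub_sq_mul_sin_sq h θ
  have hR2 : 0 < R2 := (abs_nonneg d).trans_lt h
  have hRd := Rd_pos h θ
  rw [(hasDerivAt_Rd h θ).deriv, ← sqrt_sq (by positivity : 0 ≤ R2 * Rd R2 d θ / _)]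
  congr 1
  field_simp
  linear_combination hS2

noncomputable def centralAngle (R2 d θ : ℝ) : ℝ := θ + arcsin (d / R2 * sin θ)

lemma abs_div_mul_sin_lt_one (h : |d| < R2) (θ : ℝ) : |d / R2 * sin θ| < 1 := by
  have hR2 : 0 < R2 := (abs_nonneg d).trans_lt h
  rw [abs_mul, abs_div, abs_of_pos hR2]
  calc |d| / R2 * |sin θ| ≤ |d| / R2 * 1 := by gcongr; exact abs_sin_le_one θ
    _ < 1 := by rw [mul_one, div_lt_one hR2]; exact h

lemma sqrt_one_sub_div_mul_sin_sq (h : |d| < R2) (θ : ℝ) :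
    √(1 - (d / R2 * sin θ) ^ 2) = √(R2 ^ 2 - d ^ 2 * sin θ ^ 2) / R2 := by
  have hR2 : 0 < R2 := (abs_nonneg d).trans_lt h
  have h1 : 1 - (d / R2 * sin θ) ^ 2 = (R2 ^ 2 - d ^ 2 * sin θ ^ 2) / R2 ^ 2 := by
    field_simp
  rw [h1, sqrt_div (sub_pos.mpr (sq_mul_sin_sq_lt h θ)).le, sqrt_sq hR2.le]

lemma hasDerivAt_centralAngle (h : |d| < R2) (θ : ℝ) :
    HasDerivAt (centralAngle R2 d) (Rd R2 d θ / √(R2 ^ 2 - d ^ 2 * sin θ ^ 2)) θ := by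
  have hR2 : 0 < R2 := (abs_nonneg d).trans_lt h
  have hS := sqrt_sub_sq_mul_sin_sq_pos h θ
  obtain ⟨hlo, hhi⟩ := abs_lt.mp (abs_div_mul_sin_lt_one h θ)
  have harcsin := (hasDerivAt_arcsin hlo.ne' hhi.ne).comp θ ((hasDerivAt_sin θ).const_mul (d / R2))
  refine ((hasDerivAt_id θ).add harcsin).congr_deriv ?_
  rw [sqrt_one_sub_div_mul_sin_sq h, Rd]
  field_simp
  ring

lemma sin_centralAngle (h : |d| < R2) (θ : ℝ) :
    sin (centralAngle R2 d θ) = sin θ * Rd R2 d θ / R2 := by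
  have hR2 : 0 < R2 := (abs_nonneg d).trans_lt h
  obtain ⟨hlo, hhi⟩ := abs_le.mp (abs_div_mul_sin_lt_one h θ).le
  rw [centralAngle, sin_add, cos_arcsin, sin_arcsin hlo hhi, sqrt_one_sub_div_mul_sin_sq h, Rd]
  field_simp
  ring

lemma integral_comp_centralAngle_mul (h : |d| < R2) {f : ℝ → ℝ} (hf : Continuous f) :
    ∫ θ in (0 : ℝ)..π, f (centralAngle R2 d θ) * (Rd R2 d θ / √(R2 ^ 2 - d ^ 2 * sin θ ^ 2))
      = ∫ θ in (0 : ℝ)..π, f θ := by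
  have hderiv_cont : Continuous fun θ => Rd R2 d θ / √(R2 ^ 2 - d ^ 2 * sin θ ^ 2) :=
    (by unfold Rd; fun_prop : Continuous (Rd R2 d)).div (by fun_prop)
      fun θ => (sqrt_sub_sq_mul_sin_sq_pos h θ).ne'
  have := intervalIntegral.integral_comp_mul_deriv (a := 0) (b := π)
    (fun θ _ => hasDerivAt_centralAngle h θ) hderiv_cont.continuousOn hf
  simpa [centralAngle] using this

lemma integrand_eq_comp_centralAngle_mul (h : |d| < R2) (n : ℕ) (θ : ℝ) :
    sin θ ^ n * Rd R2 d θ ^ n * √(Rd R2 d θ ^ 2 + deriv (Rd R2 d) θ ^ 2)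
      = R2 ^ (n + 1) * sin (centralAngle R2 d θ) ^ n
          * (Rd R2 d θ / √(R2 ^ 2 - d ^ 2 * sin θ ^ 2)) := by
  have hR2 : 0 < R2 := (abs_nonneg d).trans_lt h
  rw [sqrt_Rd_sq_add_deriv_sq h, sin_centralAngle h, div_pow, mul_pow]
  field_simp
  ring

end

theorem stmt4_general (R2 : ℝ) (d : ℝ) (hd : d ∈ Set.Ico 0 R2)
    (n : ℕ) :
    ∫ θ in (0:ℝ)..π,
        Real.sin θ ^ n * (Rd R2 d θ) ^ n *
          Real.sqrt ((Rd R2 d θ) ^ 2 + (deriv (Rd R2 d) θ) ^ 2)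
      = R2 ^ (n + 1) * ∫ θ in (0:ℝ)..π, Real.sin θ ^ n := by
  have h : |d| < R2 := abs_lt.mpr ⟨by linarith [hd.1, hd.2], hd.2⟩
  simp_rw [integrand_eq_comp_centralAngle_mul h n]
  rw [integral_comp_centralAngle_mul h (f := fun u => R2 ^ (n + 1) * sin u ^ n) (by fun_prop),
    intervalIntegral.integral_const_mul]

theorem stmt4 (R2 : ℝ) (hR2 : 0 < R2) (d : ℝ) (hd : d ∈ Set.Ico 0 R2)
    (n : ℕ) (hn : 2 ≤ n) :
    ∫ θ in (0:ℝ)..π,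
        Real.sin θ ^ n * (Rd R2 d θ) ^ n *
          Real.sqrt ((Rd R2 d θ) ^ 2 + (deriv (Rd R2 d) θ) ^ 2)
      = R2 ^ (n + 1) * ∫ θ in (0:ℝ)..π, Real.sin θ ^ n :=
  stmt4_general R2 d hd n
end

section
/- Let $R_2 > 0$, $d \in [0, R_2)$, $n \geq 2$, and define $R_d(\theta) = d\cos\theta + \sqrt{R_2^2 - d^2\sin^2\theta}$ and $V_3(d) = \int_0^\pi \frac{R_2 \sin^n\theta}{R_d(\theta)^{n-1}\sqrt{R_2^2 - d^2\sin^2\theta}}\, d\theta$. Then $V_3(d) \geq V_3(0) = R_2^{1-n}\int_0^\pi \sin^n\theta \, d\theta$, with equality if and only if $d = 0$. -/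
open Real

/-- The quantity `V₃(d)` from the paper. -/
noncomputable def V3 (R2 : ℝ) (n : ℕ) (d : ℝ) : ℝ :=
  ∫ θ in (0:ℝ)..π,
    R2 * Real.sin θ ^ n /
      ((d * Real.cos θ + Real.sqrt (R2 ^ 2 - d ^ 2 * Real.sin θ ^ 2)) ^ (n - 1) *
        Real.sqrt (R2 ^ 2 - d ^ 2 * Real.sin θ ^ 2))

/-- The integrand of `V3`. -/
noncomputable def fV3 (R2 : ℝ) (n : ℕ) (d θ : ℝ) : ℝ :=
  R2 * Real.sin θ ^ n /
    ((d * Real.cos θ + Real.sqrt (R2 ^ 2 - d ^ 2 * Real.sin θ ^ 2)) ^ (n - 1) *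
      Real.sqrt (R2 ^ 2 - d ^ 2 * Real.sin θ ^ 2))

lemma V3_eq (R2 : ℝ) (n : ℕ) (d : ℝ) : V3 R2 n d = ∫ θ in (0:ℝ)..π, fV3 R2 n d θ := rfl

lemma hA_pos {R2 d : ℝ} (hR2 : 0 < R2) (hd0 : 0 ≤ d) (hdR : d < R2) (θ : ℝ) :
    0 < R2 ^ 2 - d ^ 2 * Real.sin θ ^ 2 := by
  have h1 : Real.sin θ ^ 2 ≤ 1 := sin_sq_le_one θ
  nlinarith [sq_nonneg d, sq_nonneg (Real.sin θ)]

lemma ha_pos {R2 d : ℝ} (hR2 : 0 < R2) (hd0 : 0 ≤ d) (hdR : d < R2) (θ : ℝ) :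
    0 < d * Real.cos θ + Real.sqrt (R2 ^ 2 - d ^ 2 * Real.sin θ ^ 2) := by
  set s := Real.sqrt (R2 ^ 2 - d ^ 2 * Real.sin θ ^ 2) with hs
  have hA := hA_pos hR2 hd0 hdR θ
  have hs2 : s ^ 2 = R2 ^ 2 - d ^ 2 * Real.sin θ ^ 2 := Real.sq_sqrt hA.le
  have hspos : 0 < s := Real.sqrt_pos.mpr hA
  have htrig := Real.sin_sq_add_cos_sq θ
  nlinarith [sq_nonneg (s + d * Real.cos θ), sq_nonneg (d * Real.cos θ)]

lemma sqrtA_le {R2 d : ℝ} (hR2 : 0 < R2) (θ : ℝ) :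
    Real.sqrt (R2 ^ 2 - d ^ 2 * Real.sin θ ^ 2) ≤ R2 := by
  calc Real.sqrt (R2 ^ 2 - d ^ 2 * Real.sin θ ^ 2)
      ≤ Real.sqrt (R2 ^ 2) := Real.sqrt_le_sqrt (by nlinarith [sq_nonneg (d * Real.sin θ)])
    _ = R2 := Real.sqrt_sq hR2.le

lemma cont_fV3 {R2 d : ℝ} (hR2 : 0 < R2) (hd0 : 0 ≤ d) (hdR : d < R2) (n : ℕ) :
    Continuous (fV3 R2 n d) := by
  have hA := hA_pos hR2 hd0 hdR
  have ha := ha_pos hR2 hd0 hdR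
  apply Continuous.div
  · fun_prop
  · fun_prop
  · intro θ
    exact mul_ne_zero (pow_ne_zero _ (ha θ).ne') (Real.sqrt_pos.mpr (hA θ)).ne'

lemma fV3_zero {R2 : ℝ} (hR2 : 0 < R2) (n : ℕ) (θ : ℝ) :
    fV3 R2 n 0 θ = Real.sin θ ^ n / R2 ^ (n - 1) := by
  have h : Real.sqrt (R2 ^ 2 - 0 ^ 2 * Real.sin θ ^ 2) = R2 := by
    rw [show R2 ^ 2 - 0 ^ 2 * Real.sin θ ^ 2 = R2 ^ 2 by ring, Real.sqrt_sq hR2.le]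
  simp only [fV3, h, zero_mul, zero_add]
  field_simp

lemma fV3_pi_sub (R2 : ℝ) (n : ℕ) (d θ : ℝ) :
    fV3 R2 n d (π - θ) =
      R2 * Real.sin θ ^ n /
        ((-(d * Real.cos θ) + Real.sqrt (R2 ^ 2 - d ^ 2 * Real.sin θ ^ 2)) ^ (n - 1) *
          Real.sqrt (R2 ^ 2 - d ^ 2 * Real.sin θ ^ 2)) := by
  simp only [fV3, Real.sin_pi_sub, Real.cos_pi_sub]
  ring_nf

lemma inv_pow_add_inv_pow {a b c : ℝ} (ha : 0 < a) (hb : 0 < b) (hc : 0 < c)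
    (hab : a * b ≤ c ^ 2) (m : ℕ) :
    2 / c ^ m ≤ 1 / a ^ m + 1 / b ^ m := by
  have hu : (0:ℝ) < a ^ m := pow_pos ha m
  have hv : (0:ℝ) < b ^ m := pow_pos hb m
  have hcm : (0:ℝ) < c ^ m := pow_pos hc m
  set u := a ^ m with hu'
  set v := b ^ m with hv'
  have huv : u * v ≤ (c ^ m) ^ 2 := by
    calc u * v = (a * b) ^ m := (mul_pow a b m).symm
      _ ≤ (c ^ 2) ^ m := pow_le_pow_left₀ (by positivity) hab m
      _ = (c ^ m) ^ 2 := by rw [← pow_mul, ← pow_mul, mul_comm]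
  set w := Real.sqrt (u * v) with hw
  have hw2 : w ^ 2 = u * v := Real.sq_sqrt (by positivity)
  have hwpos : 0 < w := Real.sqrt_pos.mpr (by positivity)
  have hwc : w ≤ c ^ m := by
    rw [hw]
    calc Real.sqrt (u * v) ≤ Real.sqrt ((c ^ m) ^ 2) := Real.sqrt_le_sqrt huv
      _ = c ^ m := Real.sqrt_sq hcm.le
  have h2w : 2 * w ≤ u + v := by
    have h1 : Real.sqrt u ^ 2 = u := Real.sq_sqrt hu.le
    have h2 : Real.sqrt v ^ 2 = v := Real.sq_sqrt hv.le
    have h3 : w = Real.sqrt u * Real.sqrt v := Real.sqrt_mul hu.le v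
    nlinarith [sq_nonneg (Real.sqrt u - Real.sqrt v)]
  rw [div_add_div _ _ hu.ne' hv.ne', div_le_div_iff₀ hcm (by positivity)]
  nlinarith [mul_le_mul_of_nonneg_left hwc (by linarith : (0:ℝ) ≤ 2 * w)]

/-- Strict version of the key scalar inequality. -/
lemma key_scalar_strict {a b s c : ℝ} (ha : 0 < a) (hb : 0 < b) (hs : 0 < s) (hc : 0 < c)
    (hsc : s < c) (hab : a * b ≤ c ^ 2) (m : ℕ) :
    2 / c ^ m < c / (a ^ m * s) + c / (b ^ m * s) := by
  have hu : (0:ℝ) < a ^ m := pow_pos ha m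
  have hv : (0:ℝ) < b ^ m := pow_pos hb m
  have h1 : 1 / a ^ m < c / (a ^ m * s) := by
    rw [div_lt_div_iff₀ hu (by positivity)]
    nlinarith
  have h2 : 1 / b ^ m ≤ c / (b ^ m * s) := by
    rw [div_le_div_iff₀ hv (by positivity)]
    nlinarith
  have h3 := inv_pow_add_inv_pow ha hb hc hab m
  linarith

/-- The key scalar inequality. -/
lemma key_scalar {a b s c : ℝ} (ha : 0 < a) (hb : 0 < b) (hs : 0 < s) (hc : 0 < c)
    (hsc : s ≤ c) (hab : a * b ≤ c ^ 2) (m : ℕ) :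
    2 / c ^ m ≤ c / (a ^ m * s) + c / (b ^ m * s) := by
  have hu : (0:ℝ) < a ^ m := pow_pos ha m
  have hv : (0:ℝ) < b ^ m := pow_pos hb m
  have h1 : 1 / a ^ m ≤ c / (a ^ m * s) := by
    rw [div_le_div_iff₀ hu (by positivity)]
    nlinarith
  have h2 : 1 / b ^ m ≤ c / (b ^ m * s) := by
    rw [div_le_div_iff₀ hv (by positivity)]
    nlinarith
  have h3 := inv_pow_add_inv_pow ha hb hc hab m
  linarith

lemma key_pointwise {R2 d : ℝ} (hR2 : 0 < R2) (hd0 : 0 ≤ d) (hdR : d < R2) (n : ℕ)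
    (θ : ℝ) (hθ : θ ∈ Set.Icc (0:ℝ) π) :
    2 * fV3 R2 n 0 θ ≤ fV3 R2 n d θ + fV3 R2 n d (π - θ) := by
  have hA := hA_pos hR2 hd0 hdR θ
  have haθ := ha_pos hR2 hd0 hdR θ
  have hsle := sqrtA_le (d := d) hR2 θ
  set s := Real.sqrt (R2 ^ 2 - d ^ 2 * Real.sin θ ^ 2) with hs
  have hspos : 0 < s := Real.sqrt_pos.mpr hA
  have hs2 : s ^ 2 = R2 ^ 2 - d ^ 2 * Real.sin θ ^ 2 := Real.sq_sqrt hA.le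
  set a := d * Real.cos θ + s with haa
  set b := -(d * Real.cos θ) + s with hbb
  have hbpos : 0 < b := by
    have := ha_pos hR2 hd0 hdR (π - θ)
    simpa [Real.sin_pi_sub, Real.cos_pi_sub, hbb, ← hs] using this
  have habc : a * b ≤ R2 ^ 2 := by
    have htrig := Real.sin_sq_add_cos_sq θ
    nlinarith [sq_nonneg (d * Real.sin θ)]
  have hS : 0 ≤ Real.sin θ ^ n :=
    pow_nonneg (Real.sin_nonneg_of_nonneg_of_le_pi hθ.1 hθ.2) n
  have hkey := key_scalar haθ hbpos hspos hR2 hsle habc (n - 1)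
  rw [fV3_pi_sub, fV3_zero hR2]
  simp only [fV3, ← hs, ← haa, ← hbb]
  have expand : R2 * Real.sin θ ^ n / (a ^ (n-1) * s) + R2 * Real.sin θ ^ n / (b ^ (n-1) * s)
      = Real.sin θ ^ n * (R2 / (a ^ (n-1) * s) + R2 / (b ^ (n-1) * s)) := by
    field_simp
  rw [expand]
  have lhs_eq : 2 * (Real.sin θ ^ n / R2 ^ (n-1)) = Real.sin θ ^ n * (2 / R2 ^ (n-1)) := by
    ring
  rw [lhs_eq]
  exact mul_le_mul_of_nonneg_left hkey hS

lemma key_pointwise_strict {R2 d : ℝ} (hR2 : 0 < R2) (hd0 : 0 ≤ d) (hdR : d < R2)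
    (n : ℕ) (hdpos : 0 < d) (θ : ℝ) (hθ : θ ∈ Set.Ioo (0:ℝ) π) :
    2 * fV3 R2 n 0 θ < fV3 R2 n d θ + fV3 R2 n d (π - θ) := by
  have hA := hA_pos hR2 hd0 hdR θ
  have haθ := ha_pos hR2 hd0 hdR θ
  set s := Real.sqrt (R2 ^ 2 - d ^ 2 * Real.sin θ ^ 2) with hs
  have hspos : 0 < s := Real.sqrt_pos.mpr hA
  have hs2 : s ^ 2 = R2 ^ 2 - d ^ 2 * Real.sin θ ^ 2 := Real.sq_sqrt hA.le
  have hsinpos : 0 < Real.sin θ := Real.sin_pos_of_pos_of_lt_pi hθ.1 hθ.2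
  have hslt : s < R2 := by
    rw [hs]
    calc Real.sqrt (R2 ^ 2 - d ^ 2 * Real.sin θ ^ 2)
        < Real.sqrt (R2 ^ 2) := by
          apply Real.sqrt_lt_sqrt (by positivity)
          nlinarith [pow_pos (mul_pos hdpos hsinpos) 2]
      _ = R2 := Real.sqrt_sq hR2.le
  set a := d * Real.cos θ + s with haa
  set b := -(d * Real.cos θ) + s with hbb
  have hbpos : 0 < b := by
    have := ha_pos hR2 hd0 hdR (π - θ)
    simpa [Real.sin_pi_sub, Real.cos_pi_sub, hbb, ← hs] using this
  have habc : a * b ≤ R2 ^ 2 := by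
    have htrig := Real.sin_sq_add_cos_sq θ
    nlinarith [sq_nonneg (d * Real.sin θ)]
  have hS : 0 < Real.sin θ ^ n := pow_pos hsinpos n
  have hu : (0:ℝ) < a ^ (n-1) := pow_pos haθ _
  have hv : (0:ℝ) < b ^ (n-1) := pow_pos hbpos _
  have hkey := key_scalar_strict haθ hbpos hspos hR2 hslt habc (n - 1)
  rw [fV3_pi_sub, fV3_zero hR2]
  simp only [fV3, ← hs, ← haa, ← hbb]
  have expand : R2 * Real.sin θ ^ n / (a ^ (n-1) * s) + R2 * Real.sin θ ^ n / (b ^ (n-1) * s)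
      = Real.sin θ ^ n * (R2 / (a ^ (n-1) * s) + R2 / (b ^ (n-1) * s)) := by
    field_simp
  rw [expand]
  have lhs_eq : 2 * (Real.sin θ ^ n / R2 ^ (n-1)) = Real.sin θ ^ n * (2 / R2 ^ (n-1)) := by
    ring
  rw [lhs_eq]
  exact mul_lt_mul_of_pos_left hkey hS

theorem stmt5 (R2 : ℝ) (hR2 : 0 < R2) (d : ℝ) (hd : d ∈ Set.Ico 0 R2)
    (n : ℕ) (hn : 2 ≤ n) :
    (V3 R2 n 0 ≤ V3 R2 n d ∧ (V3 R2 n d = V3 R2 n 0 ↔ d = 0)) ∧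
      V3 R2 n 0 = R2 ^ (1 - (n : ℤ)) * ∫ θ in (0:ℝ)..π, Real.sin θ ^ n := by
  obtain ⟨hd0, hdR⟩ := hd
  have hcd : Continuous (fV3 R2 n d) := cont_fV3 hR2 hd0 hdR n
  have hc0 : Continuous (fV3 R2 n 0) := cont_fV3 hR2 le_rfl hR2 n
  have hcomp : Continuous (fun θ : ℝ => fV3 R2 n d (π - θ)) :=
    hcd.comp (continuous_const.sub continuous_id)
  have hsym : (∫ θ in (0:ℝ)..π, fV3 R2 n d (π - θ)) = V3 R2 n d := by
    rw [intervalIntegral.integral_comp_sub_left (fV3 R2 n d) π]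
    simp [V3_eq]
  have hV30 : V3 R2 n 0 = R2 ^ (1 - (n : ℤ)) * ∫ θ in (0:ℝ)..π, Real.sin θ ^ n := by
    rw [V3_eq]
    have key : ∀ θ : ℝ, fV3 R2 n 0 θ = R2 ^ (1 - (n : ℤ)) * Real.sin θ ^ n := by
      intro θ
      rw [fV3_zero hR2]
      have hne : R2 ≠ 0 := hR2.ne'
      have hpow : (R2 : ℝ) ^ (1 - (n : ℤ)) = R2 / R2 ^ n := by
        rw [zpow_sub₀ hne, zpow_one, zpow_natCast, div_eq_mul_inv]
      have hRn : R2 ^ n = R2 ^ (n - 1) * R2 := by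
        rw [← pow_succ]
        congr 1
        omega
      rw [hpow, hRn]
      field_simp
    simp_rw [key]
    rw [intervalIntegral.integral_const_mul]
  have hrhs : 2 * V3 R2 n d
      = ∫ θ in (0:ℝ)..π, (fV3 R2 n d θ + fV3 R2 n d (π - θ)) := by
    rw [intervalIntegral.integral_add (hcd.intervalIntegrable 0 π)
      (hcomp.intervalIntegrable 0 π)]
    rw [hsym, V3_eq]; ring
  have hlhs : 2 * V3 R2 n 0 = ∫ θ in (0:ℝ)..π, 2 * fV3 R2 n 0 θ := by
    rw [intervalIntegral.integral_const_mul, V3_eq]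
  refine ⟨⟨?_, ?_⟩, hV30⟩
  · have h2 : 2 * V3 R2 n 0 ≤ 2 * V3 R2 n d := by
      rw [hlhs, hrhs]
      apply intervalIntegral.integral_mono_on pi_pos.le
        ((continuous_const.mul hc0).intervalIntegrable 0 π)
        ((hcd.add hcomp).intervalIntegrable 0 π)
      intro θ hθ
      exact key_pointwise hR2 hd0 hdR n θ hθ
    linarith
  · constructor
    · intro heq
      by_contra hdne
      have hdpos : 0 < d := lt_of_le_of_ne hd0 (Ne.symm hdne)
      have h2 : 2 * V3 R2 n 0 < 2 * V3 R2 n d := by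
        rw [hlhs, hrhs]
        apply intervalIntegral.integral_lt_integral_of_continuousOn_of_le_of_exists_lt pi_pos
          ((continuous_const.mul hc0).continuousOn)
          ((hcd.add hcomp).continuousOn)
        · intro θ hθ
          exact key_pointwise hR2 hd0 hdR n θ ⟨hθ.1.le, hθ.2⟩
        · refine ⟨π / 2, ⟨by positivity, by linarith [pi_pos]⟩, ?_⟩
          exact key_pointwise_strict hR2 hd0 hdR n hdpos (π/2)
            ⟨by positivity, by linarith [pi_pos]⟩
      linarith
    · rintro rfl; rfl
end
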